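/- Let s > 0 and let P satisfy H1 and H2. Fix x₀ > 0 and 0 < ε < γ_c(x₀), set R = ε·(1 + 2·γ_c(x₀) − ε) / (s·(γ_c(x₀) − ε)) > 0, and let γ be a positive solution of the Dyson–Schwinger ODE on [x₀, b) with γ(x₀) = γ_c(x₀) − ε. Then γ(x) ≤ γ_c(x₀) − ε − R·ln(x/x₀) for all x ∈ [x₀, b), and consequently b ≤ x₀·exp( (γ_c(x₀) − ε)/R ) < ∞; in particular there is no positive solution on all of [x₀, ∞) starting strictly below the nullcline. -/

import Mathlib

open Real MeasureTheory Filter Set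

noncomputable section

/-- `γ` is a positive solution of the Dyson–Schwinger ODE
`γ'(x) = (γ(x) + γ(x)² − P(x)) / (s·x·γ(x))` on the set `I`. -/
def IsDSSolution (s : ℝ) (P γ : ℝ → ℝ) (I : Set ℝ) : Prop :=
  (∀ x ∈ I, 0 < γ x) ∧
    ∀ x ∈ I, HasDerivWithinAt γ ((γ x + (γ x) ^ 2 - P x) / (s * x * γ x)) I x

/-- Hypothesis H1: `P` is twice continuously differentiable on `[0,∞)`,
`P 0 = 0`, and `P x > 0` for `x > 0`. -/
def H1 (P : ℝ → ℝ) : Prop :=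
  ContDiffOn ℝ 2 P (Set.Ici 0) ∧ P 0 = 0 ∧ ∀ x > (0 : ℝ), 0 < P x

/-- Hypothesis H2: `P` is strictly increasing on `[0,∞)`. -/
def H2 (P : ℝ → ℝ) : Prop := StrictMonoOn P (Set.Ici 0)

/-- The nullcline `γ_c(x) = (√(1 + 4 P x) − 1)/2`. -/
def gammaC (P : ℝ → ℝ) (x : ℝ) : ℝ := (Real.sqrt (1 + 4 * P x) - 1) / 2

/-!
Since `γ_c² + γ_c = P` and `P` increases, the numerator `γ + γ² − P(x)` is at most
`(γ − γ_c(x₀))(1 + γ + γ_c(x₀))` beyond `x₀`. Hence the constant `γ_c(x₀) − ε` is an upper barrier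
for `γ`, and below it `γ' ≤ −ε(1 + γ + γ_c(x₀))/(s x γ) ≤ −R/x`. Comparing with the barrier
`γ_c(x₀) − ε − R log(x/x₀)`, which reaches `0` at `x₀ exp((γ_c(x₀) − ε)/R)`, bounds the lifetime
of a positive solution.
-/

theorem gammaC_sq_add_gammaC {P : ℝ → ℝ} {x : ℝ} (h : 0 < gammaC P x) :
    gammaC P x ^ 2 + gammaC P x = P x := by
  have hsqrt : 1 < √(1 + 4 * P x) := by unfold gammaC at h; linarith
  have hnonneg : 0 ≤ 1 + 4 * P x := by
    by_contra! hneg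
    rw [Real.sqrt_eq_zero'.2 hneg.le] at hsqrt
    linarith
  have hsq := Real.sq_sqrt hnonneg
  unfold gammaC
  linear_combination hsq / 4

/-- The constant `R` of the statement, written for a general level `g` in place of `γ_c(x₀)`. -/
def dsRate (s g ε : ℝ) : ℝ := ε * (1 + 2 * g - ε) / (s * (g - ε))

theorem dsRate_pos {s g ε : ℝ} (hs : 0 < s) (hε : 0 < ε) (hεg : ε < g) : 0 < dsRate s g ε := by
  unfold dsRate
  have : 0 < g - ε := sub_pos.2 hεg
  have : 0 < 1 + 2 * g - ε := by linarith
  positivity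

theorem ds_rhs_le_neg_dsRate_div {s g ε p x u : ℝ} (hs : 0 < s) (hx : 0 < x) (hu : 0 < u)
    (hε : 0 ≤ ε) (hug : u ≤ g - ε) (hp : g ^ 2 + g ≤ p) :
    (u + u ^ 2 - p) / (s * x * u) ≤ -(dsRate s g ε / x) := by
  have hgε : 0 < g - ε := hu.trans_le hug
  have hnum : u + u ^ 2 - p ≤ -(ε * (1 + u + g)) := by
    nlinarith [mul_nonneg (sub_nonneg.2 hug) (by linarith : (0 : ℝ) ≤ 1 + u + g)]
  -- `R` is the value of the decreasing function `u ↦ ε (1 + u + g) / (s u)` at `u = g - ε`.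
  have hrate : dsRate s g ε * (s * u) ≤ ε * (1 + u + g) := by
    have hchord : (1 + 2 * g - ε) * u ≤ (1 + u + g) * (g - ε) := by
      nlinarith [mul_nonneg (sub_nonneg.2 hug) (by linarith : (0 : ℝ) ≤ 1 + g)]
    calc dsRate s g ε * (s * u) = ε * ((1 + 2 * g - ε) * u) / (g - ε) := by
          unfold dsRate; field_simp
      _ ≤ ε * (1 + u + g) := by
          rw [div_le_iff₀ hgε]
          nlinarith [mul_le_mul_of_nonneg_left hchord hε]
  rw [div_le_iff₀ (by positivity)]
  calc u + u ^ 2 - p ≤ -(ε * (1 + u + g)) := hnum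
    _ ≤ -(dsRate s g ε * (s * u)) := neg_le_neg hrate
    _ = -(dsRate s g ε / x) * (s * x * u) := by field_simp

theorem hasDerivAt_sub_mul_log_div {a y : ℝ} (c R : ℝ) (ha : a ≠ 0) (hy : y ≠ 0) :
    HasDerivAt (fun x => c - R * Real.log (x / a)) (-(R / y)) y := by
  have hlog := ((hasDerivAt_id y).div_const a).log (div_ne_zero hy ha)
  refine ((hasDerivAt_const y c).sub (hlog.const_mul R)).congr_deriv ?_
  simp only [id]
  field_simp
  ring

theorem le_mul_exp_of_pos_sub_mul_log {a b c R : ℝ} (ha : 0 < a) (hc : 0 ≤ c) (hR : 0 < R)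
    (h : ∀ x ∈ Ico a b, 0 < c - R * Real.log (x / a)) : b ≤ a * Real.exp (c / R) := by
  by_contra! hb
  have haM : a ≤ a * Real.exp (c / R) :=
    le_mul_of_one_le_right ha.le (Real.one_le_exp (div_nonneg hc hR.le))
  have := h _ ⟨haM, hb⟩
  rw [mul_div_cancel_left₀ _ ha.ne', Real.log_exp, mul_div_cancel₀ _ hR.ne'] at this
  exact lt_irrefl _ (sub_self c ▸ this)

namespace IsDSSolution

variable {s : ℝ} {P γ : ℝ → ℝ}

theorem mono {I J : Set ℝ} (h : IsDSSolution s P γ I) (hJI : J ⊆ I) : IsDSSolution s P γ J :=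
  ⟨fun x hx => h.1 x (hJI hx), fun x hx => (h.2 x (hJI hx)).mono hJI⟩

theorem continuousOn {I : Set ℝ} (h : IsDSSolution s P γ I) : ContinuousOn γ I :=
  fun x hx => (h.2 x hx).continuousWithinAt

variable {a b g ε : ℝ}

theorem hasDerivWithinAt_Ici (h : IsDSSolution s P γ (Ico a b)) {x : ℝ} (hx : x ∈ Ico a b) :
    HasDerivWithinAt γ ((γ x + γ x ^ 2 - P x) / (s * x * γ x)) (Ici x) x :=
  (h.2 x hx).mono_of_mem_nhdsWithin (Ico_mem_nhdsGE_of_mem hx)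

theorem le_sub (hs : 0 < s) (ha : 0 < a) (hε : 0 < ε) (hP : ∀ x ∈ Ico a b, g ^ 2 + g ≤ P x)
    (h : IsDSSolution s P γ (Ico a b)) (hinit : γ a ≤ g - ε) : ∀ x ∈ Ico a b, γ x ≤ g - ε := by
  intro x₁ hx₁
  have hsub : Icc a x₁ ⊆ Ico a b := Icc_subset_Ico_right hx₁.2
  refine image_le_of_deriv_right_lt_deriv_boundary' (h.continuousOn.mono hsub)
    (fun x hx => h.hasDerivWithinAt_Ici (hsub (Ico_subset_Icc_self hx))) hinit
    continuousOn_const (fun x _ => hasDerivWithinAt_const x _ _) ?_ (right_mem_Icc.2 hx₁.1)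
  intro x hx hcontact
  have hxI := hsub (Ico_subset_Icc_self hx)
  have hγx := h.1 x hxI
  have hxpos : 0 < x := ha.trans_le hx.1
  calc _ ≤ -(dsRate s g ε / x) :=
        ds_rhs_le_neg_dsRate_div hs hxpos hγx hε.le hcontact.le (hP x hxI)
    _ < 0 := neg_neg_of_pos (div_pos (dsRate_pos hs hε (by linarith)) hxpos)

theorem le_sub_dsRate_mul_log (hs : 0 < s) (ha : 0 < a) (hε : 0 < ε)
    (hP : ∀ x ∈ Ico a b, g ^ 2 + g ≤ P x) (h : IsDSSolution s P γ (Ico a b))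
    (hinit : γ a ≤ g - ε) :
    ∀ x ∈ Ico a b, γ x ≤ g - ε - dsRate s g ε * Real.log (x / a) := by
  intro x₁ hx₁
  have hsub : Icc a x₁ ⊆ Ico a b := Icc_subset_Ico_right hx₁.2
  have hB : ∀ x ∈ Icc a x₁, HasDerivAt (fun y => g - ε - dsRate s g ε * Real.log (y / a))
      (-(dsRate s g ε / x)) x :=
    fun x hx => hasDerivAt_sub_mul_log_div _ _ ha.ne' (ha.trans_le hx.1).ne'
  refine image_le_of_deriv_right_le_deriv_boundary (h.continuousOn.mono hsub)
    (fun x hx => h.hasDerivWithinAt_Ici (hsub (Ico_subset_Icc_self hx)))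
    (by simp [div_self ha.ne', hinit])
    (fun x hx => (hB x hx).continuousAt.continuousWithinAt)
    (fun x hx => (hB x (Ico_subset_Icc_self hx)).hasDerivWithinAt) ?_ (right_mem_Icc.2 hx₁.1)
  intro x hx
  have hxI := hsub (Ico_subset_Icc_self hx)
  exact ds_rhs_le_neg_dsRate_div hs (ha.trans_le hx.1) (h.1 x hxI) hε.le
    (h.le_sub hs ha hε hP hinit x hxI) (hP x hxI)

theorem le_mul_exp (hs : 0 < s) (ha : 0 < a) (hε : 0 < ε) (hεg : ε < g)
    (hP : ∀ x ∈ Ico a b, g ^ 2 + g ≤ P x) (h : IsDSSolution s P γ (Ico a b))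
    (hinit : γ a ≤ g - ε) : b ≤ a * Real.exp ((g - ε) / dsRate s g ε) :=
  le_mul_exp_of_pos_sub_mul_log ha (sub_pos.2 hεg).le (dsRate_pos hs hε hεg) fun x hx =>
    (h.1 x hx).trans_le (h.le_sub_dsRate_mul_log hs ha hε hP hinit x hx)

end IsDSSolution

theorem not_isDSSolution_Ici {s a g : ℝ} {P γ : ℝ → ℝ} (hs : 0 < s) (ha : 0 < a)
    (hP : ∀ x ∈ Ici a, g ^ 2 + g ≤ P x) (hinit : γ a < g) : ¬ IsDSSolution s P γ (Ici a) := by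
  intro h
  set ε := g - γ a
  set lifetime := a * Real.exp ((g - ε) / dsRate s g ε)
  have : lifetime + 1 ≤ lifetime :=
    (h.mono (J := Ico a (lifetime + 1)) Ico_subset_Ici_self).le_mul_exp hs ha (sub_pos.2 hinit)
      (by linarith [h.1 a self_mem_Ici]) (fun x hx => hP x hx.1) (sub_sub_cancel g (γ a)).ge
  linarith

theorem stmt_7_general (s : ℝ) (hs : 0 < s) (P : ℝ → ℝ) (hP2 : H2 P)
    (x₀ ε : ℝ) (hx₀ : 0 < x₀) (hε : 0 < ε) (hε' : ε < gammaC P x₀)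
    (R : ℝ) (hR : R = ε * (1 + 2 * gammaC P x₀ - ε) / (s * (gammaC P x₀ - ε)))
    (b : ℝ) (γ : ℝ → ℝ) (hγ : IsDSSolution s P γ (Set.Ico x₀ b))
    (hinit : γ x₀ = gammaC P x₀ - ε) :
    0 < R ∧
    (∀ x ∈ Set.Ico x₀ b, γ x ≤ gammaC P x₀ - ε - R * Real.log (x / x₀)) ∧
    b ≤ x₀ * Real.exp ((gammaC P x₀ - ε) / R) ∧
    ¬ ∃ γ' : ℝ → ℝ, IsDSSolution s P γ' (Set.Ici x₀) ∧ γ' x₀ < gammaC P x₀ := by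
  have hP : ∀ x ∈ Ici x₀, gammaC P x₀ ^ 2 + gammaC P x₀ ≤ P x := fun x hx =>
    (gammaC_sq_add_gammaC (hε.trans hε')).trans_le
      (hP2.monotoneOn (mem_Ici.2 hx₀.le) (mem_Ici.2 (hx₀.le.trans hx)) hx)
  have hPIco : ∀ x ∈ Ico x₀ b, gammaC P x₀ ^ 2 + gammaC P x₀ ≤ P x := fun x hx => hP x hx.1
  replace hR : R = dsRate s (gammaC P x₀) ε := hR
  subst hR
  exact ⟨dsRate_pos hs hε hε', hγ.le_sub_dsRate_mul_log hs hx₀ hε hPIco hinit.le,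
    hγ.le_mul_exp hs hx₀ hε hε' hPIco hinit.le,
    fun ⟨_, hγ', hlt⟩ => not_isDSSolution_Ici hs hx₀ hP hlt hγ'⟩

theorem stmt_7 (s : ℝ) (hs : 0 < s) (P : ℝ → ℝ) (hP1 : H1 P) (hP2 : H2 P)
    (x₀ ε : ℝ) (hx₀ : 0 < x₀) (hε : 0 < ε) (hε' : ε < gammaC P x₀)
    (R : ℝ) (hR : R = ε * (1 + 2 * gammaC P x₀ - ε) / (s * (gammaC P x₀ - ε)))
    (b : ℝ) (γ : ℝ → ℝ) (hγ : IsDSSolution s P γ (Set.Ico x₀ b))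
    (hinit : γ x₀ = gammaC P x₀ - ε) :
    0 < R ∧
    (∀ x ∈ Set.Ico x₀ b, γ x ≤ gammaC P x₀ - ε - R * Real.log (x / x₀)) ∧
    b ≤ x₀ * Real.exp ((gammaC P x₀ - ε) / R) ∧
    ¬ ∃ γ' : ℝ → ℝ, IsDSSolution s P γ' (Set.Ici x₀) ∧ γ' x₀ < gammaC P x₀ :=
  stmt_7_general s hs P hP2 x₀ ε hx₀ hε hε' R hR b γ hγ hinit
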